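/- Let G be a finite graph and D ⊆ V(G) a nonempty set of vertices such that G \ D is a forest. Then the absolute value of the alternating sum Σ_{σ independent in G} (-1)^{|σ|} is at most the number of independent sets of the induced subgraph G[D]. -/

import Mathlib

/-!
Group the independent sets `σ` of `G` by their trace `τ = σ ∩ D`, an independent set of `G[D]`.
The sets with trace `τ` are the `τ ∪ ρ` with `ρ` independent in the forest
`F_τ = G[{w ∉ D | w has no neighbour in τ}]`, so together they contribute `±I(F_τ)`, where `I`
is the independence polynomial at `-1`. For a forest, `I ∈ {-1, 0, 1}`: a vertex `v` with at most
one neighbour `u` exists, `v` is isolated in `A - u` so `I(A - u) = 0`, and the recursion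
`I(A) = I(A - u) - I(A - N[u])` reduces to the smaller forest `A - N[u]`.
-/

open Finset

attribute [local instance] Classical.propDecidable

/-- `s` is an independent set of the graph `G`. -/
def SimpleGraph.IsIndep {V : Type*} (G : SimpleGraph V) (s : Finset V) : Prop :=
  ∀ u ∈ s, ∀ v ∈ s, ¬ G.Adj u v

namespace SimpleGraph

variable {V : Type*} (G : SimpleGraph V)

theorem IsAcyclic.exists_forall_adj_eq [Finite V] [Nonempty V] (h : G.IsAcyclic) :
    ∃ u x : V, ∀ w, G.Adj u w → w = x := by
  obtain ⟨u, v, p, hp, hmax⟩ := Walk.exists_isPath_forall_isPath_length_le_length G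
  refine ⟨u, p.snd, fun w hadj => h.eq_snd_of_adj_start hp hadj ?_⟩
  by_contra hw
  have := hmax _ _ _ (hp.cons hw : (Walk.cons hadj.symm p).IsPath)
  simp at this

variable {G}

theorem IsIndep.mono {s t : Finset V} (hs : G.IsIndep s) (hts : t ⊆ s) : G.IsIndep t :=
  fun u hu v hv => hs u (hts hu) v (hts hv)

theorem isIndep_union {s t : Finset V} :
    G.IsIndep (s ∪ t) ↔ G.IsIndep s ∧ G.IsIndep t ∧ ∀ x ∈ s, ∀ y ∈ t, ¬ G.Adj x y := by
  simp only [IsIndep, mem_union]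
  grind [Adj.symm]

theorem isIndep_insert {v : V} {s : Finset V} :
    G.IsIndep (insert v s) ↔ G.IsIndep s ∧ ∀ w ∈ s, ¬ G.Adj v w := by
  rw [insert_eq, isIndep_union]
  simp [IsIndep]

variable (G)

/-- The independence polynomial of `G[A]` evaluated at `-1`. -/
noncomputable def indepAltSum (A : Finset V) : ℤ :=
  ∑ s ∈ A.powerset.filter G.IsIndep, (-1 : ℤ) ^ s.card

theorem indepAltSum_insert {v : V} {B : Finset V} (hv : v ∉ B) :
    G.indepAltSum (insert v B) =
      G.indepAltSum B - G.indepAltSum (B.filter (fun w => ¬ G.Adj v w)) := by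
  simp only [indepAltSum, sum_filter]
  rw [sum_powerset_insert hv, sub_eq_add_neg, ← sum_neg_distrib]
  congr 1
  rw [← sum_subset (powerset_mono.2 (filter_subset (fun w => ¬ G.Adj v w) B))]
  · refine sum_congr rfl fun t ht => ?_
    have hvt : v ∉ t := fun h => hv (filter_subset _ B (mem_powerset.1 ht h))
    have hnadj : ∀ w ∈ t, ¬ G.Adj v w := fun w hw => (mem_filter.1 (mem_powerset.1 ht hw)).2
    simp only [isIndep_insert, and_iff_left hnadj, card_insert_of_notMem hvt, pow_succ]
    split_ifs <;> simp
  · intro t htB ht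
    have : ¬ ∀ w ∈ t, ¬ G.Adj v w := fun h =>
      ht (mem_powerset.2 fun w hw => mem_filter.2 ⟨mem_powerset.1 htB hw, h w hw⟩)
    simp [isIndep_insert, this]

theorem indepAltSum_eq_zero_of_forall_not_adj {v : V} {A : Finset V} (hv : v ∈ A)
    (hiso : ∀ w ∈ A, ¬ G.Adj v w) : G.indepAltSum A = 0 := by
  rw [← insert_erase hv, indepAltSum_insert G (notMem_erase v A),
    filter_true_of_mem fun w hw => hiso w (mem_of_mem_erase hw), sub_self]

theorem natAbs_indepAltSum_le_one (A : Finset V) (hA : (G.induce (A : Set V)).IsAcyclic) :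
    (G.indepAltSum A).natAbs ≤ 1 := by
  induction A using strongInduction with
  | H A ih =>
  rcases A.eq_empty_or_nonempty with rfl | hne
  · simp [indepAltSum, filter_singleton, IsIndep]
  have : Nonempty (A : Set V) := hne.to_subtype
  obtain ⟨⟨v, hv⟩, ⟨x, hx⟩, hleaf⟩ := hA.exists_forall_adj_eq
  have hleaf (w) (hw : w ∈ A) (hvw : G.Adj v w) : w = x :=
    congrArg Subtype.val (hleaf ⟨w, hw⟩ hvw)
  by_cases hvx : G.Adj v x
  · rw [← insert_erase hx, indepAltSum_insert G (notMem_erase x A),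
      G.indepAltSum_eq_zero_of_forall_not_adj (mem_erase.2 ⟨hvx.ne, hv⟩)
        fun w hw hvw => (mem_erase.1 hw).1 (hleaf w (mem_of_mem_erase hw) hvw),
      zero_sub, Int.natAbs_neg]
    have hsub : (A.erase x).filter (fun w => ¬ G.Adj x w) ⊂ A :=
      (filter_subset _ _).trans_ssubset (erase_ssubset hx)
    exact ih _ hsub (hA.embedding (G.induceHomOfLE (coe_subset.2 hsub.subset)))
  · rw [G.indepAltSum_eq_zero_of_forall_not_adj hv fun w hw hvw => hvx (hleaf w hw hvw ▸ hvw)]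
    simp

theorem sum_filter_inter_eq_mul_indepAltSum [Fintype V] {D τ : Finset V} (hτD : τ ⊆ D)
    (hτ : G.IsIndep τ) :
    ∑ s ∈ (univ.filter G.IsIndep).filter (fun s => s ∩ D = τ), (-1 : ℤ) ^ s.card =
      (-1) ^ τ.card * G.indepAltSum (univ.filter fun w => w ∉ D ∧ ∀ x ∈ τ, ¬ G.Adj x w) := by
  rw [indepAltSum, mul_sum]
  refine sum_nbij' (· \ D) (· ∪ τ) (fun s hs => ?_) (fun σ hσ => ?_) (fun s hs => ?_)
    (fun σ hσ => ?_) (fun s hs => ?_)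
  all_goals simp only [mem_filter, mem_univ, true_and, mem_powerset] at *
  · refine ⟨fun w hw => ?_, hs.1.mono sdiff_subset⟩
    obtain ⟨hws, hwD⟩ := mem_sdiff.1 hw
    exact mem_filter.2
      ⟨mem_univ w, hwD, fun x hx => hs.1 x (mem_of_mem_inter_left (hs.2 ▸ hx)) w hws⟩
  · have hσ' (w) (hw : w ∈ σ) := mem_filter.1 (hσ.1 hw)
    refine ⟨isIndep_union.2 ⟨hσ.2, hτ, fun x hx y hy hxy => (hσ' x hx).2.2 y hy hxy.symm⟩, ?_⟩
    grind
  · rw [← hs.2, sdiff_union_inter]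
  · have hσ' (w) (hw : w ∈ σ) := mem_filter.1 (hσ.1 hw)
    grind
  · rw [← pow_add, ← hs.2, card_inter_add_card_sdiff]

end SimpleGraph

theorem abs_alternating_sum_le_indep_count_general {V : Type*} [Fintype V] (G : SimpleGraph V)
    (D : Finset V)
    (hforest : (G.induce ((↑D : Set V)ᶜ)).IsAcyclic) :
    (∑ s ∈ Finset.univ.filter G.IsIndep, (-1 : ℤ) ^ s.card).natAbs
      ≤ (Finset.univ.filter (fun s => s ⊆ D ∧ G.IsIndep s)).card := by
  set T := univ.filter fun s => s ⊆ D ∧ G.IsIndep s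
  have hmaps : ∀ s ∈ univ.filter G.IsIndep, s ∩ D ∈ T := fun s hs => by
    simp only [T, mem_filter, mem_univ, true_and] at hs ⊢
    exact ⟨inter_subset_right, hs.mono inter_subset_left⟩
  have hfiber : ∀ τ ∈ T,
      (∑ s ∈ (univ.filter G.IsIndep).filter (fun s => s ∩ D = τ), (-1 : ℤ) ^ s.card).natAbs
        ≤ 1 := fun τ hτ => by
    simp only [T, mem_filter, mem_univ, true_and] at hτ
    rw [G.sum_filter_inter_eq_mul_indepAltSum hτ.1 hτ.2, Int.natAbs_mul, Int.natAbs_pow,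
      Int.natAbs_neg, Int.natAbs_one, one_pow, one_mul]
    exact G.natAbs_indepAltSum_le_one _
      (hforest.embedding (G.induceHomOfLE fun w hw => (mem_filter.1 hw).2.1))
  calc (∑ s ∈ univ.filter G.IsIndep, (-1 : ℤ) ^ s.card).natAbs
      = (∑ τ ∈ T, ∑ s ∈ (univ.filter G.IsIndep).filter (fun s => s ∩ D = τ),
          (-1 : ℤ) ^ s.card).natAbs := by rw [sum_fiberwise_of_maps_to hmaps]
    _ ≤ ∑ τ ∈ T, (∑ s ∈ (univ.filter G.IsIndep).filter (fun s => s ∩ D = τ),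
          (-1 : ℤ) ^ s.card).natAbs := Int.natAbs_sum_le _ _
    _ ≤ ∑ _τ ∈ T, 1 := sum_le_sum hfiber
    _ = T.card := card_eq_sum_ones T |>.symm

/-- If `D` is a nonempty set of vertices such that `G \ D` is a forest, then the
absolute value of `∑_{σ indep in G} (-1)^{|σ|}` is at most the number of independent
sets of the induced subgraph `G[D]`. -/
theorem abs_alternating_sum_le_indep_count {V : Type*} [Fintype V] (G : SimpleGraph V)
    (D : Finset V) (hD : D.Nonempty)
    (hforest : (G.induce ((↑D : Set V)ᶜ)).IsAcyclic) :
    (∑ s ∈ Finset.univ.filter G.IsIndep, (-1 : ℤ) ^ s.card).natAbs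
      ≤ (Finset.univ.filter (fun s => s ⊆ D ∧ G.IsIndep s)).card :=
  abs_alternating_sum_le_indep_count_general G D hforest
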